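/- arXiv:2302.05401 — 4 statements merged into one kernel-verified Lean document; each statement's English description precedes it below -/
import Mathlib

section
/- Let d ≥ 3 be an integer and γ > −((d−2)/2)², and set σ = (d−2)/2 − (1/2)√((d−2)² + 4γ). Then for every f ∈ C_c^∞(ℝ^d \ {0}; ℂ) one has ∫_{ℝ^d} (|∇f(x)|² + γ|x|^{−2}|f(x)|²) dx = ∫_{ℝ^d} |∇f(x) + σ |x|^{−2} x f(x)|² dx; in particular the left-hand side is nonnegative. -/
noncomputable section

open MeasureTheory Complex

/-- Euclidean space `ℝ^d`. -/
abbrev Ed (d : ℕ) : Type := EuclideanSpace ℝ (Fin d)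

/-- `i`-th component of the gradient of a complex-valued function. -/
def grad {d : ℕ} (f : Ed d → ℂ) (x : Ed d) (i : Fin d) : ℂ :=
  fderiv ℝ f x (EuclideanSpace.single i 1)

/-- `|∇f(x)|²` for complex-valued `f`. -/
def gradNormSq {d : ℕ} (f : Ed d → ℂ) (x : Ed d) : ℝ :=
  ∑ i, ‖grad f x i‖ ^ 2

/-- `i`-th component of the gradient of a real-valued function. -/
def gradR {d : ℕ} (f : Ed d → ℝ) (x : Ed d) (i : Fin d) : ℝ :=
  fderiv ℝ f x (EuclideanSpace.single i 1)

/-- `|∇f(x)|²` for real-valued `f`. -/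
def gradNormSqR {d : ℕ} (f : Ed d → ℝ) (x : Ed d) : ℝ :=
  ∑ i, gradR f x i ^ 2

/-- The Euclidean Laplacian (sum of second partial derivatives). -/
def lapR {d : ℕ} (f : Ed d → ℝ) (x : Ed d) : ℝ :=
  ∑ i, fderiv ℝ (fun y => fderiv ℝ f y (EuclideanSpace.single i 1)) x
    (EuclideanSpace.single i 1)

/-- A function on `ℝ^d` is radial if it depends only on `|x|`. -/
def IsRadial {d : ℕ} {α : Type*} (f : Ed d → α) : Prop :=
  ∀ x y : Ed d, ‖x‖ = ‖y‖ → f x = f y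

/-- `f` is admissible: `C¹` away from the origin, `|∇f| ∈ L²`, `f ∈ L^{2*}`,
and `∫ |x|⁻²|f|² < ∞`. -/
def Admissible {d : ℕ} (f : Ed d → ℂ) : Prop :=
  ContDiffOn ℝ 1 f {(0 : Ed d)}ᶜ ∧
  Integrable (fun x => gradNormSq f x) ∧
  Integrable (fun x => ‖f x‖ ^ ((2 * d : ℝ) / ((d : ℝ) - 2))) ∧
  Integrable (fun x => ‖f x‖ ^ 2 / ‖x‖ ^ 2)

/-- Squared modified Sobolev norm `‖f‖²_{Ḣ¹_γ}`. -/
def H1gammaSq {d : ℕ} (γ : ℝ) (f : Ed d → ℂ) : ℝ :=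
  ∫ x, (gradNormSq f x + γ / ‖x‖ ^ 2 * ‖f x‖ ^ 2)

/-- The energy `E_γ[f]`. -/
def energy {d : ℕ} (γ : ℝ) (f : Ed d → ℂ) : ℝ :=
  (1 / 2) * H1gammaSq γ f -
    (((d : ℝ) - 2) / (2 * (d : ℝ))) * ∫ x, ‖f x‖ ^ ((2 * d : ℝ) / ((d : ℝ) - 2))

/-- The real inner product of `Ḣ¹` viewed as a real Hilbert space. -/
def H1inner {d : ℕ} (f g : Ed d → ℂ) : ℝ :=
  ∫ x, ∑ i, (grad f x i * (starRingEnd ℂ) (grad g x i)).re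

/-- The Talenti function `W_0`. -/
def W0 (d : ℕ) (x : Ed d) : ℝ :=
  ((d : ℝ) * ((d : ℝ) - 2)) ^ (((d : ℝ) - 2) / 4) *
    (1 + ‖x‖ ^ 2) ^ (-(((d : ℝ) - 2) / 2))

/-- `W_1 = ((d-2)/2) W_0 + x · ∇W_0`. -/
def W1 (d : ℕ) (x : Ed d) : ℝ :=
  (((d : ℝ) - 2) / 2) * W0 d x + fderiv ℝ (W0 d) x x

/-- The sharp Sobolev constant `C_S(0)`. -/
def CS0 (d : ℕ) : ℝ :=
  (∫ x, W0 d x ^ ((2 * d : ℝ) / ((d : ℝ) - 2))) ^ (((d : ℝ) - 2) / (2 * (d : ℝ))) /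
    Real.sqrt (∫ x, gradNormSqR (W0 d) x)

/-- The quadratic form `Q` from the energy expansion around `W_0`. -/
def Qform (d : ℕ) (g : Ed d → ℂ) : ℝ :=
  (1 / 2) * (∫ x, gradNormSq g x) -
    (1 / 2) * ∫ x, W0 d x ^ ((4 : ℝ) / ((d : ℝ) - 2)) *
      ((((d : ℝ) + 2) / ((d : ℝ) - 2)) * (g x).re ^ 2 + (g x).im ^ 2)

/-- The modulation `f_{[θ,μ]}(x) = e^{iθ} μ^{-(d-2)/2} f(x/μ)`. -/
def modScale {d : ℕ} (θ μ : ℝ) (f : Ed d → ℂ) (x : Ed d) : ℂ :=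
  Complex.exp ((θ : ℂ) * Complex.I) *
    ((μ ^ (-(((d : ℝ) - 2) / 2)) : ℝ) : ℂ) * f (μ⁻¹ • x)

/-- Squared modified Sobolev norm for real-valued functions. -/
def H1gammaSqR {d : ℕ} (γ : ℝ) (f : Ed d → ℝ) : ℝ :=
  ∫ x, (gradNormSqR f x + γ / ‖x‖ ^ 2 * f x ^ 2)

/-- Energy for real-valued functions. -/
def energyR {d : ℕ} (γ : ℝ) (f : Ed d → ℝ) : ℝ :=
  (1 / 2) * H1gammaSqR γ f -
    (((d : ℝ) - 2) / (2 * (d : ℝ))) * ∫ x, |f x| ^ ((2 * d : ℝ) / ((d : ℝ) - 2))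


/-! Expanding the square, `|∇f + σ x f/|x|²|² = |∇f|² + σ x·∇|f|²/|x|² + σ² |f|²/|x|²`.
Integrating the middle term by parts against the field `x/|x|²`, whose divergence is
`(d-2)/|x|²`, turns it into `-(d-2) σ ∫ |f|²/|x|²` (no boundary terms, as `f` vanishes near the
origin and at infinity). The right-hand side is thus `∫ |∇f|² + (σ² - (d-2)σ) ∫ |f|²/|x|²`, and
`σ` is a root of `σ² - (d-2)σ = γ`. -/

section IntegrableProduct

variable {X : Type*} [TopologicalSpace X] [MeasurableSpace X] [OpensMeasurableSpace X]
  {μ : Measure X} [IsFiniteMeasureOnCompacts μ]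

theorem integrable_mul_of_tsupport_subset {U : Set X} (hU : IsOpen U) {k h : X → ℝ}
    (hk : ContinuousOn k U) (hh : Continuous h) (hsupp : HasCompactSupport h)
    (hhU : tsupport h ⊆ U) : Integrable (fun x => k x * h x) μ :=
  ((hk.mul hh.continuousOn).continuous_of_tsupport_subset hU
    (tsupport_mul_subset_right.trans hhU)).integrable_of_hasCompactSupport hsupp.mul_left

end IntegrableProduct

section EuclideanHardy

variable {ι : Type*} [Fintype ι]

theorem contDiffOn_coord_mul_inv_norm_sq (i : ι) :
    ContDiffOn ℝ ⊤ (fun y : EuclideanSpace ℝ ι => y i * (‖y‖ ^ 2)⁻¹) {0}ᶜ := by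
  intro x hx
  exact ((EuclideanSpace.proj (𝕜 := ℝ) i).contDiff.contDiffAt.mul
    ((contDiff_norm_sq ℝ).contDiffAt.inv (pow_ne_zero _ (norm_ne_zero_iff.2 hx)))).contDiffWithinAt

variable [DecidableEq ι]

theorem fderiv_coord_mul_inv_norm_sq_single {x : EuclideanSpace ℝ ι} (hx : x ≠ 0) (i : ι) :
    fderiv ℝ (fun y : EuclideanSpace ℝ ι => y i * (‖y‖ ^ 2)⁻¹) x (EuclideanSpace.single i 1) =
      (‖x‖ ^ 2)⁻¹ - 2 * x i ^ 2 * ((‖x‖ ^ 2)⁻¹) ^ 2 := by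
  have hq := (hasDerivAt_inv (pow_ne_zero 2 (norm_ne_zero_iff.2 hx))).comp_hasFDerivAt x
    (hasFDerivAt_id x).norm_sq
  have h : HasFDerivAt (fun y : EuclideanSpace ℝ ι => y i * (‖y‖ ^ 2)⁻¹) _ x :=
    (EuclideanSpace.proj (𝕜 := ℝ) i).hasFDerivAt.mul hq
  rw [h.fderiv]
  simp [EuclideanSpace.inner_single_right]
  ring

theorem sum_fderiv_coord_mul_inv_norm_sq {x : EuclideanSpace ℝ ι} (hx : x ≠ 0) :
    ∑ i, fderiv ℝ (fun y : EuclideanSpace ℝ ι => y i * (‖y‖ ^ 2)⁻¹) x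
        (EuclideanSpace.single i 1) = ((Fintype.card ι : ℝ) - 2) * (‖x‖ ^ 2)⁻¹ := by
  simp only [fderiv_coord_mul_inv_norm_sq_single hx, Finset.sum_sub_distrib, ← Finset.sum_mul,
    ← Finset.mul_sum, ← EuclideanSpace.real_norm_sq_eq, Finset.sum_const, Finset.card_univ,
    nsmul_eq_mul]
  field_simp

theorem integrable_coord_mul_inv_norm_sq_mul_fderiv {u : EuclideanSpace ℝ ι → ℝ}
    (hu : ContDiff ℝ 1 u) (hsupp : HasCompactSupport u)
    (h0 : (0 : EuclideanSpace ℝ ι) ∉ tsupport u) (i : ι) :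
    Integrable (fun x => x i * (‖x‖ ^ 2)⁻¹ * fderiv ℝ u x (EuclideanSpace.single i 1)) :=
  integrable_mul_of_tsupport_subset isOpen_compl_singleton
    (contDiffOn_coord_mul_inv_norm_sq i).continuousOn
    ((hu.continuous_fderiv one_ne_zero).clm_apply continuous_const)
    (hsupp.fderiv_apply ℝ _)
    ((tsupport_fderiv_apply_subset ℝ _).trans (Set.subset_compl_singleton_iff.2 h0))

theorem sum_integral_coord_mul_inv_norm_sq_mul_fderiv {u : EuclideanSpace ℝ ι → ℝ}
    (hu : ContDiff ℝ 1 u) (hsupp : HasCompactSupport u)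
    (h0 : (0 : EuclideanSpace ℝ ι) ∉ tsupport u) :
    ∑ i, ∫ x, x i * (‖x‖ ^ 2)⁻¹ * fderiv ℝ u x (EuclideanSpace.single i 1) =
      -((Fintype.card ι : ℝ) - 2) * ∫ x, (‖x‖ ^ 2)⁻¹ * u x := by
  set g : ι → EuclideanSpace ℝ ι → ℝ := fun i y => y i * (‖y‖ ^ 2)⁻¹
  set e : ι → EuclideanSpace ℝ ι := fun i => EuclideanSpace.single i 1
  have hU : IsOpen ({0}ᶜ : Set (EuclideanSpace ℝ ι)) := isOpen_compl_singleton
  have hsub : tsupport u ⊆ {0}ᶜ := Set.subset_compl_singleton_iff.2 h0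
  have hg (i : ι) : ContDiffOn ℝ 1 (g i) {0}ᶜ :=
    (contDiffOn_coord_mul_inv_norm_sq i).of_le le_top
  have hgu (i : ι) : Integrable (fun x => g i x * fderiv ℝ u x (e i)) :=
    integrable_coord_mul_inv_norm_sq_mul_fderiv hu hsupp h0 i
  have hg'u (i : ι) : Integrable (fun x => fderiv ℝ (g i) x (e i) * u x) :=
    integrable_mul_of_tsupport_subset hU
      (((hg i).continuousOn_fderiv_of_isOpen hU le_rfl).clm_apply continuousOn_const)
      hu.continuous hsupp hsub
  have hibp (i : ι) : ∫ x, g i x * fderiv ℝ u x (e i) = -∫ x, fderiv ℝ (g i) x (e i) * u x :=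
    integral_mul_fderiv_eq_neg_fderiv_mul_of_integrable (hg'u i) (hgu i)
      (integrable_mul_of_tsupport_subset hU (hg i).continuousOn hu.continuous hsupp hsub)
      (fun x hx => ((hg i).differentiableOn one_ne_zero x (hsub hx)).differentiableAt
        (hU.mem_nhds (hsub hx)))
      (fun x _ => hu.differentiable one_ne_zero x)
  have hdiv (x : EuclideanSpace ℝ ι) :
      ∑ i, fderiv ℝ (g i) x (e i) * u x = ((Fintype.card ι : ℝ) - 2) * ((‖x‖ ^ 2)⁻¹ * u x) := by
    by_cases hx : x = 0
    · simp [hx, image_eq_zero_of_notMem_tsupport h0]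
    · rw [← Finset.sum_mul, sum_fderiv_coord_mul_inv_norm_sq hx]
      ring
  calc ∑ i, ∫ x, g i x * fderiv ℝ u x (e i)
      = -∫ x, ∑ i, fderiv ℝ (g i) x (e i) * u x := by
        rw [integral_finsetSum _ fun i _ => hg'u i, ← Finset.sum_neg_distrib]
        exact Finset.sum_congr rfl fun i _ => hibp i
    _ = _ := by simp_rw [hdiv, integral_const_mul]; ring

end EuclideanHardy

theorem DifferentiableAt.fderiv_norm_sq_apply {E : Type*} [NormedAddCommGroup E]
    [NormedSpace ℝ E] {f : E → ℂ} {x : E} (hf : DifferentiableAt ℝ f x) (v : E) :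
    fderiv ℝ (fun y => ‖f y‖ ^ 2) x v = 2 * ((starRingEnd ℂ) (f x) * fderiv ℝ f x v).re := by
  rw [hf.hasFDerivAt.norm_sq.fderiv]
  simp [Complex.inner]
  ring

theorem sum_norm_grad_add_mul_sq {d : ℕ} {f : Ed d → ℂ} {x : Ed d} (hf : DifferentiableAt ℝ f x)
    (σ : ℝ) :
    ∑ i, ‖grad f x i + ((σ / ‖x‖ ^ 2 * x i : ℝ) : ℂ) * f x‖ ^ 2 =
      gradNormSq f x
        + σ * ∑ i, x i * (‖x‖ ^ 2)⁻¹ * fderiv ℝ (fun y => ‖f y‖ ^ 2) x (EuclideanSpace.single i 1)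
        + σ ^ 2 * ((‖x‖ ^ 2)⁻¹ * ‖f x‖ ^ 2) := by
  have hterm (a b : ℂ) (r : ℝ) :
      ‖a + (r : ℂ) * b‖ ^ 2 = ‖a‖ ^ 2 + r * (2 * ((starRingEnd ℂ) b * a).re) + r ^ 2 * ‖b‖ ^ 2 := by
    simp only [Complex.sq_norm, Complex.normSq_apply, Complex.add_re, Complex.add_im,
      Complex.mul_re, Complex.mul_im, Complex.ofReal_re, Complex.ofReal_im, Complex.conj_re,
      Complex.conj_im]
    ring
  -- at `x = 0` both sides reduce to `gradNormSq f 0`, since `0⁻¹ = 0`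
  have hq : ((‖x‖ ^ 2)⁻¹) ^ 2 * ‖x‖ ^ 2 = (‖x‖ ^ 2)⁻¹ := by
    rcases eq_or_ne (‖x‖ ^ 2) 0 with h | h
    · simp [h]
    · field_simp
  have hlast : ∑ i, (σ / ‖x‖ ^ 2 * x i) ^ 2 * ‖f x‖ ^ 2 = σ ^ 2 * ((‖x‖ ^ 2)⁻¹ * ‖f x‖ ^ 2) := by
    calc ∑ i, (σ / ‖x‖ ^ 2 * x i) ^ 2 * ‖f x‖ ^ 2
        = σ ^ 2 * ((‖x‖ ^ 2)⁻¹) ^ 2 * ‖f x‖ ^ 2 * ∑ i, x i ^ 2 := by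
          rw [Finset.mul_sum]
          exact Finset.sum_congr rfl fun i _ => by ring
      _ = _ := by
          rw [← EuclideanSpace.real_norm_sq_eq]
          linear_combination σ ^ 2 * ‖f x‖ ^ 2 * hq
  simp only [hterm, hf.fderiv_norm_sq_apply, grad, gradNormSq, Finset.sum_add_distrib, hlast,
    Finset.mul_sum]
  congr 2
  exact Finset.sum_congr rfl fun i _ => by ring

theorem integrable_gradNormSq {d : ℕ} {f : Ed d → ℂ} (hf : ContDiff ℝ 1 f)
    (hsupp : HasCompactSupport f) : Integrable (fun x => gradNormSq f x) := by
  unfold gradNormSq grad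
  refine integrable_finsetSum _ fun i _ => Continuous.integrable_of_hasCompactSupport ?_ ?_
  · exact ((hf.continuous_fderiv one_ne_zero).clm_apply continuous_const).norm.pow 2
  · exact (hsupp.fderiv_apply ℝ _).comp_left (g := fun z : ℂ => ‖z‖ ^ 2) (by simp)

section VanishingNearOrigin

variable {d : ℕ} {f : Ed d → ℂ}

theorem integrable_inv_norm_sq_mul_norm_sq (hf : Continuous f) (hsupp : HasCompactSupport f)
    (h0 : (0 : Ed d) ∉ tsupport f) : Integrable (fun x : Ed d => (‖x‖ ^ 2)⁻¹ * ‖f x‖ ^ 2) :=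
  integrable_mul_of_tsupport_subset isOpen_compl_singleton
    ((continuous_norm.pow 2).continuousOn.inv₀ fun x hx => by simpa using hx) (hf.norm.pow 2)
    (hsupp.comp_left (g := fun z : ℂ => ‖z‖ ^ 2) (by simp))
    ((tsupport_comp_subset (g := fun z : ℂ => ‖z‖ ^ 2) (by simp) f).trans
      (Set.subset_compl_singleton_iff.2 h0))

theorem integral_gradNormSq_add_div_norm_sq_mul (hf : ContDiff ℝ 1 f)
    (hsupp : HasCompactSupport f) (h0 : (0 : Ed d) ∉ tsupport f) (γ : ℝ) :
    ∫ x, (gradNormSq f x + γ / ‖x‖ ^ 2 * ‖f x‖ ^ 2) =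
      (∫ x, gradNormSq f x) + γ * ∫ x, (‖x‖ ^ 2)⁻¹ * ‖f x‖ ^ 2 := by
  simp_rw [div_eq_mul_inv, mul_assoc]
  rw [integral_add (integrable_gradNormSq hf hsupp)
      ((integrable_inv_norm_sq_mul_norm_sq hf.continuous hsupp h0).const_mul γ),
    integral_const_mul]

theorem integral_sum_norm_grad_add_mul_sq (hf : ContDiff ℝ 1 f)
    (hsupp : HasCompactSupport f) (h0 : (0 : Ed d) ∉ tsupport f) (σ : ℝ) :
    ∫ x, ∑ i, ‖grad f x i + ((σ / ‖x‖ ^ 2 * x i : ℝ) : ℂ) * f x‖ ^ 2 =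
      (∫ x, gradNormSq f x) + (σ ^ 2 - ((d : ℝ) - 2) * σ) * ∫ x, (‖x‖ ^ 2)⁻¹ * ‖f x‖ ^ 2 := by
  have hu : ContDiff ℝ 1 (fun y => ‖f y‖ ^ 2) := hf.norm_sq ℂ
  have hu_supp : HasCompactSupport (fun y => ‖f y‖ ^ 2) :=
    hsupp.comp_left (g := fun z : ℂ => ‖z‖ ^ 2) (by simp)
  have hu0 : (0 : Ed d) ∉ tsupport (fun y => ‖f y‖ ^ 2) := fun h =>
    h0 (tsupport_comp_subset (g := fun z : ℂ => ‖z‖ ^ 2) (by simp) f h)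
  have hcross (i : Fin d) := integrable_coord_mul_inv_norm_sq_mul_fderiv hu hu_supp hu0 i
  have hgrad := integrable_gradNormSq hf hsupp
  have hhardy := integrable_inv_norm_sq_mul_norm_sq hf.continuous hsupp h0
  simp_rw [sum_norm_grad_add_mul_sq (hf.differentiable one_ne_zero _)]
  rw [integral_add (hgrad.fun_add ((integrable_finsetSum _ fun i _ => hcross i).const_mul σ))
      (hhardy.const_mul _),
    integral_add hgrad ((integrable_finsetSum _ fun i _ => hcross i).const_mul σ),
    integral_const_mul, integral_const_mul, integral_finsetSum _ fun i _ => hcross i,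
    sum_integral_coord_mul_inv_norm_sq_mul_fderiv hu hu_supp hu0, Fintype.card_fin]
  ring

end VanishingNearOrigin

theorem statement0_general (d : ℕ) (γ : ℝ)
    (hγ : -((((d : ℝ) - 2) / 2) ^ 2) < γ)
    (σ : ℝ) (hσ : σ = ((d : ℝ) - 2) / 2 - (1 / 2) * Real.sqrt (((d : ℝ) - 2) ^ 2 + 4 * γ))
    (f : Ed d → ℂ) (hf : ContDiff ℝ (⊤ : ℕ∞) f) (hsupp : HasCompactSupport f)
    (h0 : (0 : Ed d) ∉ tsupport f) :
    (∫ x, (gradNormSq f x + γ / ‖x‖ ^ 2 * ‖f x‖ ^ 2)) =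
      (∫ x, ∑ i, ‖grad f x i + ((σ / ‖x‖ ^ 2 * x i : ℝ) : ℂ) * f x‖ ^ 2) ∧
    0 ≤ ∫ x, (gradNormSq f x + γ / ‖x‖ ^ 2 * ‖f x‖ ^ 2) := by
  have hσγ : σ ^ 2 - ((d : ℝ) - 2) * σ = γ := by
    have := Real.sq_sqrt (show 0 ≤ ((d : ℝ) - 2) ^ 2 + 4 * γ by nlinarith)
    rw [hσ]
    linear_combination (1 / 4) * this
  have hf1 : ContDiff ℝ 1 f := hf.of_le (by exact_mod_cast le_top)
  have hid : ∫ x, (gradNormSq f x + γ / ‖x‖ ^ 2 * ‖f x‖ ^ 2) =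
      ∫ x, ∑ i, ‖grad f x i + ((σ / ‖x‖ ^ 2 * x i : ℝ) : ℂ) * f x‖ ^ 2 := by
    rw [integral_gradNormSq_add_div_norm_sq_mul hf1 hsupp h0,
      integral_sum_norm_grad_add_mul_sq hf1 hsupp h0, hσγ]
  exact ⟨hid, hid ▸ integral_nonneg fun x => by positivity⟩

/-- the identity `∫ (|∇f|² + γ|x|⁻²|f|²) = ∫ |∇f + σ|x|⁻² x f|²`
for smooth compactly supported `f` vanishing near the origin, and nonnegativity. -/
theorem statement0 (d : ℕ) (hd : 3 ≤ d) (γ : ℝ)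
    (hγ : -((((d : ℝ) - 2) / 2) ^ 2) < γ)
    (σ : ℝ) (hσ : σ = ((d : ℝ) - 2) / 2 - (1 / 2) * Real.sqrt (((d : ℝ) - 2) ^ 2 + 4 * γ))
    (f : Ed d → ℂ) (hf : ContDiff ℝ (⊤ : ℕ∞) f) (hsupp : HasCompactSupport f)
    (h0 : (0 : Ed d) ∉ tsupport f) :
    (∫ x, (gradNormSq f x + γ / ‖x‖ ^ 2 * ‖f x‖ ^ 2)) =
      (∫ x, ∑ i, ‖grad f x i + ((σ / ‖x‖ ^ 2 * x i : ℝ) : ℂ) * f x‖ ^ 2) ∧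
    0 ≤ ∫ x, (gradNormSq f x + γ / ‖x‖ ^ 2 * ‖f x‖ ^ 2) :=
  statement0_general d γ hγ σ hσ f hf hsupp h0
end
end

section
/- Let d ≥ 3 be an integer and γ > −(d−2)²/4, and set β = √(1 + 4γ/(d−2)²). Then the function W_γ(x) = [d(d−2)β²]^{(d−2)/4} (|x|^{β−1}/(1 + |x|^{2β}))^{(d−2)/2} satisfies the static equation −ΔW_γ(x) + γ|x|^{−2} W_γ(x) = W_γ(x)^{(d+2)/(d−2)} for every x ∈ ℝ^d \ {0}. -/
noncomputable section

open MeasureTheory Complex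

/-!
In the variable `t = |x|²` one has `W_γ(x) = C t^p (1 + t^β)^{-a}` with `a = (d-2)/2`,
`p = (β-1)a/2` and `C = (d(d-2)β²)^{(d-2)/4}`, and the Laplacian of a function `G(|x|²)` is
`4t G''(t) + 2d G'(t)`. Differentiating `t^p (1 + t^β)^{-a}` only produces terms of the same shape,
so the equation becomes an identity between such terms, i.e. between polynomials in `t` and `t^β`;
it holds exactly because `γ = (β² - 1)(d-2)²/4`.
-/

open Real Filter Topology

def bubble (β p a t : ℝ) : ℝ := t ^ p * (1 + t ^ β) ^ (-a)

def bubbleDeriv (β p a t : ℝ) : ℝ :=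
  p * bubble β (p - 1) a t - a * β * bubble β (p + β - 1) (a + 1) t

lemma hasDerivAt_bubble (β p a : ℝ) {t : ℝ} (ht : 0 < t) :
    HasDerivAt (bubble β p a) (bubbleDeriv β p a t) t := by
  have hpow : HasDerivAt (fun s : ℝ => s ^ p) (p * t ^ (p - 1)) t :=
    hasDerivAt_rpow_const (Or.inl ht.ne')
  have hbase : HasDerivAt (fun s : ℝ => 1 + s ^ β) (β * t ^ (β - 1)) t :=
    (hasDerivAt_rpow_const (Or.inl ht.ne')).const_add 1
  have hden := hbase.rpow_const (p := -a) (Or.inl (by positivity))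
  refine (hpow.mul hden).congr_deriv ?_
  rw [bubbleDeriv, bubble, bubble, show p + β - 1 = p + (β - 1) by ring, rpow_add ht,
    show -(a + 1) = -a - 1 by ring]
  ring

lemma hasDerivAt_bubbleDeriv (β p a : ℝ) {t : ℝ} (ht : 0 < t) :
    HasDerivAt (bubbleDeriv β p a)
      (p * bubbleDeriv β (p - 1) a t - a * β * bubbleDeriv β (p + β - 1) (a + 1) t) t :=
  ((hasDerivAt_bubble β (p - 1) a ht).const_mul p).sub
    ((hasDerivAt_bubble β (p + β - 1) (a + 1) ht).const_mul (a * β))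

lemma bubble_eq_mul {β q b q' b' t : ℝ} (ht : 0 < t) (j k m : ℕ)
    (hq : q' = q + j + k * β) (hb : b' = b - m) :
    bubble β q' b' t = bubble β q b t * t ^ j * (t ^ β) ^ k * (1 + t ^ β) ^ m := by
  subst hq hb
  rw [bubble, bubble, rpow_add ht, rpow_add ht, rpow_natCast, mul_comm (k : ℝ),
    rpow_mul_natCast ht.le, neg_sub, sub_eq_neg_add, rpow_add (by positivity), rpow_natCast]
  ring

lemma bubble_nonneg (β p a : ℝ) {t : ℝ} (ht : 0 ≤ t) : 0 ≤ bubble β p a t := by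
  unfold bubble
  positivity

lemma bubble_rpow (β p a q : ℝ) {t : ℝ} (ht : 0 < t) :
    bubble β p a t ^ q = bubble β (p * q) (a * q) t := by
  rw [bubble, bubble, mul_rpow (by positivity) (by positivity), ← rpow_mul ht.le,
    ← rpow_mul (by positivity), neg_mul]

lemma rpow_div_one_add_rpow_eq_bubble (β s : ℝ) {r : ℝ} (hr : 0 < r) :
    (r ^ (β - 1) / (1 + r ^ (2 * β))) ^ s = bubble β ((β - 1) * s / 2) s (r ^ 2) := by
  have hsq : ∀ c : ℝ, (r ^ 2) ^ c = r ^ (2 * c) := fun c => by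
    rw [← rpow_natCast, ← rpow_mul hr.le, Nat.cast_ofNat]
  rw [bubble, hsq, hsq, div_rpow (by positivity) (by positivity), ← rpow_mul hr.le,
    rpow_neg (by positivity), div_eq_mul_inv]
  ring_nf

lemma bubble_ode {n β p a t : ℝ} (hn : n ≠ 2) (ht : 0 < t) (ha : a = (n - 2) / 2)
    (hp : p = (β - 1) * a / 2) :
    -(4 * t * (p * bubbleDeriv β (p - 1) a t - a * β * bubbleDeriv β (p + β - 1) (a + 1) t)
        + 2 * n * bubbleDeriv β p a t)
      + (β ^ 2 - 1) * (n - 2) ^ 2 / 4 / t * bubble β p a t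
      = n * (n - 2) * β ^ 2 * bubble β p a t ^ ((n + 2) / (n - 2)) := by
  have hn2 : n - 2 ≠ 0 := sub_ne_zero.mpr hn
  set B := bubble β (p - 2) (a + 2) t
  set u := t ^ β
  -- every term is `B` times a monomial in `t`, `u` and `1 + u`
  have hshift {q' b' : ℝ} (j k m : ℕ) (hq : q' = p - 2 + j + k * β) (hb : b' = a + 2 - m) :
      bubble β q' b' t = B * t ^ j * u ^ k * (1 + u) ^ m :=
    bubble_eq_mul ht j k m hq hb
  have h₁ : bubble β (p - 1 - 1) a t = B * t ^ 0 * u ^ 0 * (1 + u) ^ 2 :=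
    hshift 0 0 2 (by push_cast; ring) (by push_cast; ring)
  have h₂ : bubble β (p - 1 + β - 1) (a + 1) t = B * t ^ 0 * u ^ 1 * (1 + u) ^ 1 :=
    hshift 0 1 1 (by push_cast; ring) (by push_cast; ring)
  have h₃ : bubble β (p + β - 1 - 1) (a + 1) t = B * t ^ 0 * u ^ 1 * (1 + u) ^ 1 :=
    hshift 0 1 1 (by push_cast; ring) (by push_cast; ring)
  have h₄ : bubble β (p + β - 1 + β - 1) (a + 1 + 1) t = B * t ^ 0 * u ^ 2 * (1 + u) ^ 0 :=
    hshift 0 2 0 (by push_cast; ring) (by push_cast; ring)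
  have h₅ : bubble β (p - 1) a t = B * t ^ 1 * u ^ 0 * (1 + u) ^ 2 :=
    hshift 1 0 2 (by push_cast; ring) (by push_cast; ring)
  have h₆ : bubble β (p + β - 1) (a + 1) t = B * t ^ 1 * u ^ 1 * (1 + u) ^ 1 :=
    hshift 1 1 1 (by push_cast; ring) (by push_cast; ring)
  have h₇ : bubble β p a t = B * t ^ 2 * u ^ 0 * (1 + u) ^ 2 :=
    hshift 2 0 2 (by push_cast; ring) (by push_cast; ring)
  have h₈ : bubble β (p * ((n + 2) / (n - 2))) (a * ((n + 2) / (n - 2))) t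
      = B * t ^ 1 * u ^ 1 * (1 + u) ^ 0 :=
    hshift 1 1 0 (by rw [hp, ha]; field_simp; ring) (by rw [ha]; field_simp; ring)
  rw [bubble_rpow _ _ _ _ ht, bubbleDeriv, bubbleDeriv, bubbleDeriv, h₁, h₂, h₃, h₄, h₅, h₆, h₇,
    h₈, hp, ha]
  field_simp
  ring

lemma HasDerivAt.comp_norm_sq {E : Type*} [NormedAddCommGroup E] [InnerProductSpace ℝ E]
    {g : ℝ → ℝ} {g' : ℝ} {y : E} (hg : HasDerivAt g g' (‖y‖ ^ 2)) :
    HasFDerivAt (fun z : E => g (‖z‖ ^ 2)) (g' • 2 • innerSL ℝ y) y :=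
  hg.comp_hasFDerivAt y (hasStrictFDerivAt_norm_sq y).hasFDerivAt

section Radial

variable {d : ℕ} {W : Ed d → ℝ} {G G' G'' : ℝ → ℝ}

lemma fderiv_single_of_eq_comp_norm_sq (hW : ∀ y, y ≠ 0 → W y = G (‖y‖ ^ 2))
    (hG : ∀ t, 0 < t → HasDerivAt G (G' t) t) {y : Ed d} (hy : y ≠ 0) (i : Fin d) :
    fderiv ℝ W y (EuclideanSpace.single i 1) = 2 * G' (‖y‖ ^ 2) * y i := by
  have hev : W =ᶠ[𝓝 y] fun z => G (‖z‖ ^ 2) :=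
    (eventually_ne_nhds hy).mono fun z hz => hW z hz
  rw [hev.fderiv_eq, (hG _ (by positivity)).comp_norm_sq.fderiv]
  simp only [smul_apply, coe_innerSL_apply, EuclideanSpace.inner_single_right, ringHom_apply,
    one_mul, nsmul_eq_mul, Nat.cast_ofNat, smul_eq_mul]
  ring

lemma lapR_of_eq_comp_norm_sq (hW : ∀ y, y ≠ 0 → W y = G (‖y‖ ^ 2))
    (hG : ∀ t, 0 < t → HasDerivAt G (G' t) t) (hG' : ∀ t, 0 < t → HasDerivAt G' (G'' t) t)
    {x : Ed d} (hx : x ≠ 0) :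
    lapR W x = 4 * ‖x‖ ^ 2 * G'' (‖x‖ ^ 2) + 2 * d * G' (‖x‖ ^ 2) := by
  have hpartial (i : Fin d) :
      fderiv ℝ (fun y => fderiv ℝ W y (EuclideanSpace.single i 1)) x (EuclideanSpace.single i 1)
        = 4 * G'' (‖x‖ ^ 2) * x i ^ 2 + 2 * G' (‖x‖ ^ 2) := by
    have hev : (fun y => fderiv ℝ W y (EuclideanSpace.single i 1)) =ᶠ[𝓝 x]
        fun y => 2 * G' (‖y‖ ^ 2) * y i :=
      (eventually_ne_nhds hx).mono fun y hy => fderiv_single_of_eq_comp_norm_sq hW hG hy i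
    have hderiv : HasFDerivAt (fun y : Ed d => 2 * G' (‖y‖ ^ 2) * y i) _ x :=
      ((hG' _ (by positivity)).comp_norm_sq.const_mul 2).mul
        (EuclideanSpace.proj (𝕜 := ℝ) i).hasFDerivAt
    rw [hev.fderiv_eq, hderiv.fderiv]
    simp only [add_apply, smul_apply, PiLp.proj_apply, PiLp.single_eq_same, smul_eq_mul, mul_one,
      coe_innerSL_apply, EuclideanSpace.inner_single_right, ringHom_apply, one_mul, nsmul_eq_mul,
      Nat.cast_ofNat]
    ring
  simp only [lapR, hpartial, Finset.sum_add_distrib, ← Finset.mul_sum,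
    ← EuclideanSpace.real_norm_sq_eq, Finset.sum_const, Finset.card_univ, Fintype.card_fin,
    nsmul_eq_mul]
  ring

end Radial

/-- `W_γ` solves the static equation `-ΔW_γ + γ|x|⁻²W_γ = W_γ^{(d+2)/(d-2)}`
away from the origin. -/
theorem statement3 (d : ℕ) (hd : 3 ≤ d) (γ : ℝ)
    (hγ : -(((d : ℝ) - 2) ^ 2 / 4) < γ)
    (β : ℝ) (hβ : β = Real.sqrt (1 + 4 * γ / ((d : ℝ) - 2) ^ 2))
    (Wγ : Ed d → ℝ)
    (hW : ∀ x : Ed d, Wγ x =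
      ((d : ℝ) * ((d : ℝ) - 2) * β ^ 2) ^ (((d : ℝ) - 2) / 4) *
        (‖x‖ ^ (β - 1) / (1 + ‖x‖ ^ (2 * β))) ^ (((d : ℝ) - 2) / 2)) :
    ∀ x : Ed d, x ≠ 0 →
      -lapR Wγ x + γ / ‖x‖ ^ 2 * Wγ x = Wγ x ^ (((d : ℝ) + 2) / ((d : ℝ) - 2)) := by
  intro x hx
  have hd2 : 0 < (d : ℝ) - 2 := by
    have : (3 : ℝ) ≤ d := by exact_mod_cast hd
    linarith
  have hβsq : β ^ 2 = 1 + 4 * γ / ((d : ℝ) - 2) ^ 2 := by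
    have : -1 < 4 * γ / ((d : ℝ) - 2) ^ 2 := by
      rw [lt_div_iff₀ (by positivity)]
      linarith
    rw [hβ, sq_sqrt (by linarith)]
  have hγβ : γ = (β ^ 2 - 1) * ((d : ℝ) - 2) ^ 2 / 4 := by
    rw [hβsq]
    field_simp
    ring
  set K : ℝ := d * (d - 2) * β ^ 2
  set C : ℝ := K ^ (((d : ℝ) - 2) / 4)
  set a : ℝ := ((d : ℝ) - 2) / 2
  set p : ℝ := (β - 1) * a / 2
  have hK : 0 ≤ K := by positivity
  have hC : C ^ (((d : ℝ) + 2) / ((d : ℝ) - 2)) = K * C := by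
    rw [← rpow_mul hK, ← rpow_one_add' hK (by positivity)]
    congr 1
    field_simp
    ring
  have hWG (y : Ed d) (hy : y ≠ 0) : Wγ y = C * bubble β p a (‖y‖ ^ 2) := by
    rw [hW, rpow_div_one_add_rpow_eq_bubble _ _ (norm_pos_iff.2 hy)]
  have ht : 0 < ‖x‖ ^ 2 := by positivity
  rw [lapR_of_eq_comp_norm_sq hWG (fun t ht => (hasDerivAt_bubble β p a ht).const_mul C)
    (fun t ht => (hasDerivAt_bubbleDeriv β p a ht).const_mul C) hx, hWG x hx]
  calc _ = C * (-(4 * ‖x‖ ^ 2 * (p * bubbleDeriv β (p - 1) a (‖x‖ ^ 2)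
          - a * β * bubbleDeriv β (p + β - 1) (a + 1) (‖x‖ ^ 2))
          + 2 * d * bubbleDeriv β p a (‖x‖ ^ 2)) + γ / ‖x‖ ^ 2 * bubble β p a (‖x‖ ^ 2)) := by
        ring
    _ = C * (K * bubble β p a (‖x‖ ^ 2) ^ (((d : ℝ) + 2) / ((d : ℝ) - 2))) := by
        rw [hγβ, bubble_ode (by linarith) ht rfl rfl]
    _ = _ := by
        rw [mul_rpow (by positivity) (bubble_nonneg β p a ht.le), hC]
        ring
end
end

section
/- Let d ≥ 3 be an integer and p ≥ 2. There exists a constant C = C(d,p) > 0 such that for every R > 0 and every radial f : ℝ^d → ℂ that is continuously differentiable with f ∈ L²(ℝ^d) and |∇f| ∈ L²(ℝ^d), one has ∫_{|x|≥R} |f(x)|^p dx ≤ C R^{−(d−1)(p−2)/2} (∫_{|x|≥R} |f|² dx)^{(p+2)/4} (∫_{|x|≥R} |∇f|² dx)^{(p−2)/4}. -/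
/-!
Strauss' radial lemma. Write the radial `f` as `f x = φ ‖x‖`. For `r ≥ R`, the fundamental
theorem of calculus from `r` to a far point `s` (where `‖φ s‖²` is as small as we like, since
`t ^ (d-1) ‖φ t‖²` is integrable) and Cauchy–Schwarz with the weight `t ^ (d-1) ≥ r ^ (d-1)` give
`‖φ r‖² ≤ 2 r^{-(d-1)} (∫_R^∞ t^{d-1} ‖φ‖²)^{1/2} (∫_R^∞ t^{d-1} ‖φ'‖²)^{1/2}`.
In polar coordinates these one-dimensional integrals are `1/ω` times the integrals of `‖f‖²` and
of `‖φ'(|x|)‖² ≤ |∇f(x)|²` over `{|x| ≥ R}`, where `ω = d |B₁|` is the area of the unit sphere.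
Hence `‖f‖² ≤ K := (2/ω) R^{-(d-1)} ‖f‖₂ ‖∇f‖₂` on `{|x| ≥ R}`, and then
`∫ ‖f‖^p ≤ K^{(p-2)/2} ∫ ‖f‖²` there, which is the claim with `C = (2/ω)^{(p-2)/2}`.
-/

noncomputable section

open MeasureTheory Complex

open Set Filter Module

theorem indicator_setOf_le_norm {E F : Type*} [Norm E] [Zero F] (R : ℝ) (g : ℝ → F) :
    {x : E | R ≤ ‖x‖}.indicator (fun x => g ‖x‖) = fun x => (Ici R).indicator g ‖x‖ := by
  ext x
  by_cases hx : R ≤ ‖x‖ <;> simp [indicator, hx]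

section Polar

variable {E F : Type*} [NormedAddCommGroup E] [NormedSpace ℝ E] [MeasurableSpace E] [BorelSpace E]
  [FiniteDimensional ℝ E] [Nontrivial E] (μ : Measure E) [μ.IsAddHaarMeasure]
  [NormedAddCommGroup F] [NormedSpace ℝ F] {R : ℝ}

theorem integrableOn_fun_norm_addHaar_exterior_iff (hR : 0 < R) {g : ℝ → F} :
    IntegrableOn (fun x => g ‖x‖) {x : E | R ≤ ‖x‖} μ ↔
      IntegrableOn (fun t => t ^ (finrank ℝ E - 1) • g t) (Ioi R) := by
  rw [← integrable_indicator_iff (measurableSet_le measurable_const measurable_norm),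
    indicator_setOf_le_norm, integrable_fun_norm_addHaar μ, ← indicator_smul,
    integrableOn_indicator_iff measurableSet_Ici, inter_eq_left.2 (Ici_subset_Ioi.2 hR),
    integrableOn_Ici_iff_integrableOn_Ioi]

theorem setIntegral_fun_norm_addHaar_exterior (hR : 0 < R) (g : ℝ → F) :
    ∫ x in {x : E | R ≤ ‖x‖}, g ‖x‖ ∂μ =
      finrank ℝ E • μ.real (Metric.ball 0 1) • ∫ t in Ioi R, t ^ (finrank ℝ E - 1) • g t := by
  rw [← integral_indicator (measurableSet_le measurable_const measurable_norm),
    indicator_setOf_le_norm, integral_fun_norm_addHaar μ, ← indicator_smul,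
    setIntegral_indicator measurableSet_Ici, inter_eq_right.2 (Ici_subset_Ioi.2 hR),
    integral_Ici_eq_integral_Ioi]

end Polar

theorem integral_mul_le_sqrt_mul_sqrt {α : Type*} [MeasurableSpace α] {μ : Measure α}
    {f g : α → ℝ} (hf : 0 ≤ᵐ[μ] f) (hg : 0 ≤ᵐ[μ] g) (hf2 : MemLp f 2 μ) (hg2 : MemLp g 2 μ) :
    ∫ a, f a * g a ∂μ ≤ √(∫ a, f a ^ 2 ∂μ) * √(∫ a, g a ^ 2 ∂μ) := by
  have h2 : ENNReal.ofReal 2 = 2 := by norm_num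
  have := integral_mul_le_Lp_mul_Lq_of_nonneg Real.HolderConjugate.two_two hf hg
    (h2 ▸ hf2) (h2 ▸ hg2)
  simpa only [Real.rpow_two, ← Real.sqrt_eq_rpow] using this

theorem setIntegral_rpow_le_of_sq_le {α : Type*} [MeasurableSpace α] {μ : Measure α} {s : Set α}
    {u : α → ℝ} {K p : ℝ} (hu : ∀ x, 0 ≤ u x) (hs : MeasurableSet s)
    (hu2 : IntegrableOn (fun x => u x ^ 2) s μ) (hK : ∀ x ∈ s, u x ^ 2 ≤ K) (hp : 2 ≤ p) :
    ∫ x in s, u x ^ p ∂μ ≤ K ^ ((p - 2) / 2) * ∫ x in s, u x ^ 2 ∂μ := by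
  rw [← integral_const_mul]
  refine integral_mono_of_nonneg (.of_forall fun x => Real.rpow_nonneg (hu x) p)
    (hu2.const_mul _) ((ae_restrict_iff' hs).2 (.of_forall fun x hx => ?_))
  calc u x ^ p = (u x ^ (2 : ℝ)) ^ ((p - 2) / 2) * u x ^ (2 : ℝ) := by
        rw [← Real.rpow_mul (hu x), ← Real.rpow_add' (hu x) (by linarith)]
        ring_nf
    _ ≤ K ^ ((p - 2) / 2) * u x ^ 2 := by
        rw [Real.rpow_two]
        exact mul_le_mul_of_nonneg_right
          (Real.rpow_le_rpow (sq_nonneg _) (hK x hx) (by linarith)) (sq_nonneg _)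

theorem frequently_atTop_lt_of_integrableOn_Ioi {g : ℝ → ℝ} {a ε : ℝ}
    (hg : IntegrableOn g (Ioi a)) (hε : 0 < ε) : ∃ᶠ t in atTop, g t < ε := by
  intro hge
  obtain ⟨b, hb⟩ := eventually_atTop.1 (hge.mono fun t ht => not_lt.1 ht)
  have hconst : IntegrableOn (fun _ => ε) (Ioi (max a b)) := by
    refine Integrable.mono' (hg.mono_set (Ioi_subset_Ioi (le_max_left a b)))
      aestronglyMeasurable_const ((ae_restrict_iff' measurableSet_Ioi).2 (.of_forall ?_))
    intro t ht
    rw [Real.norm_of_nonneg hε.le]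
    exact hb t (le_max_right a b |>.trans ht.le)
  rcases integrable_const_iff.1 hconst with h | h
  · exact hε.ne' h
  · rw [isFiniteMeasure_restrict, Real.volume_Ioi] at h
    exact h rfl

section Profile

variable {E : Type*} [NormedAddCommGroup E] [InnerProductSpace ℝ E]

theorem norm_sq_le_norm_sq_add_integral {φ : ℝ → E} (hφ : ContDiff ℝ 1 φ) {r s : ℝ} (hrs : r ≤ s) :
    ‖φ r‖ ^ 2 ≤ ‖φ s‖ ^ 2 + 2 * ∫ t in Ioc r s, ‖φ t‖ * ‖deriv φ t‖ := by
  have hφ' : Continuous (deriv φ) := hφ.continuous_deriv le_rfl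
  have hφd : Differentiable ℝ φ := hφ.differentiable one_ne_zero
  have hftc : ∫ t in r..s, 2 * inner ℝ (φ t) (deriv φ t) = ‖φ s‖ ^ 2 - ‖φ r‖ ^ 2 :=
    intervalIntegral.integral_eq_sub_of_hasDerivAt (fun t _ => (hφd t).hasDerivAt.norm_sq)
      ((continuous_const.mul (hφd.continuous.inner hφ')).intervalIntegrable r s)
  have hlow : ∫ t in r..s, -(2 * (‖φ t‖ * ‖deriv φ t‖)) ≤
      ∫ t in r..s, 2 * inner ℝ (φ t) (deriv φ t) := by
    refine intervalIntegral.integral_mono_on hrs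
      ((continuous_const.mul (hφd.continuous.norm.mul hφ'.norm)).neg.intervalIntegrable r s)
      ((continuous_const.mul (hφd.continuous.inner hφ')).intervalIntegrable r s) fun t _ => ?_
    have := neg_abs_le (inner ℝ (φ t) (deriv φ t))
    have := abs_real_inner_le_norm (φ t) (deriv φ t)
    linarith
  rw [intervalIntegral.integral_neg, intervalIntegral.integral_const_mul,
    intervalIntegral.integral_of_le hrs] at hlow
  linarith

theorem setIntegral_Ioc_le_inv_pow_mul {g : ℝ → ℝ} (hg : Continuous g) (hg0 : 0 ≤ g) {n : ℕ}
    {R r s : ℝ} (hR : 0 < R) (hr : R ≤ r) (hint : IntegrableOn (fun t => t ^ n * g t) (Ioi R)) :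
    ∫ t in Ioc r s, g t ≤ (r ^ n)⁻¹ * ∫ t in Ioi R, t ^ n * g t := by
  have hr0 : 0 < r := hR.trans_le hr
  calc ∫ t in Ioc r s, g t
      ≤ ∫ t in Ioc r s, (r ^ n)⁻¹ * (t ^ n * g t) := by
        refine setIntegral_mono_on hg.integrableOn_Ioc
          ((continuous_const.mul ((continuous_pow n).mul hg)).integrableOn_Ioc)
          measurableSet_Ioc fun t ht => ?_
        rw [← mul_assoc]
        refine le_mul_of_one_le_left (hg0 t) ?_
        rw [inv_mul_eq_div, one_le_div (by positivity)]
        exact pow_le_pow_left₀ hr0.le ht.1.le n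
    _ = (r ^ n)⁻¹ * ∫ t in Ioc r s, t ^ n * g t := integral_const_mul _ _
    _ ≤ (r ^ n)⁻¹ * ∫ t in Ioi R, t ^ n * g t := by
        refine mul_le_mul_of_nonneg_left (setIntegral_mono_set hint ?_ ?_) (by positivity)
        · exact (ae_restrict_iff' measurableSet_Ioi).2 (.of_forall fun t ht =>
            mul_nonneg (pow_nonneg (hR.trans ht).le n) (hg0 t))
        · exact .of_forall fun t ht => hr.trans_lt ht.1

theorem norm_sq_le_of_integrableOn_Ioi {φ : ℝ → E} (hφ : ContDiff ℝ 1 φ) {n : ℕ} {R r : ℝ}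
    (hR : 0 < R) (hr : R ≤ r) (hφint : IntegrableOn (fun t => t ^ n * ‖φ t‖ ^ 2) (Ioi R))
    (hφ'int : IntegrableOn (fun t => t ^ n * ‖deriv φ t‖ ^ 2) (Ioi R)) :
    ‖φ r‖ ^ 2 ≤ 2 * (r ^ n)⁻¹ *
      (√(∫ t in Ioi R, t ^ n * ‖φ t‖ ^ 2) * √(∫ t in Ioi R, t ^ n * ‖deriv φ t‖ ^ 2)) := by
  have hφc : Continuous fun t => ‖φ t‖ := hφ.continuous.norm
  have hφ'c : Continuous fun t => ‖deriv φ t‖ := (hφ.continuous_deriv le_rfl).norm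
  have hmemLp : ∀ {g : ℝ → ℝ} {s : ℝ}, Continuous g → MemLp g 2 (volume.restrict (Ioc r s)) :=
    fun hg => (memLp_two_iff_integrable_sq hg.aestronglyMeasurable).2 (hg.pow 2).integrableOn_Ioc
  have hrn : 0 ≤ (r ^ n)⁻¹ := by have := hR.trans_le hr; positivity
  refine le_of_forall_pos_le_add fun ε hε => ?_
  obtain ⟨s, hs, hrs, hs1⟩ : ∃ s, s ^ n * ‖φ s‖ ^ 2 < ε ∧ r ≤ s ∧ 1 ≤ s :=
    ((frequently_atTop_lt_of_integrableOn_Ioi hφint hε).and_eventually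
      ((eventually_ge_atTop r).and (eventually_ge_atTop 1))).exists
  have hφs : ‖φ s‖ ^ 2 < ε :=
    (le_mul_of_one_le_left (sq_nonneg _) (one_le_pow₀ hs1)).trans_lt hs
  have hCS := integral_mul_le_sqrt_mul_sqrt (.of_forall fun t => norm_nonneg (φ t))
    (.of_forall fun t => norm_nonneg (deriv φ t)) (hmemLp (s := s) hφc) (hmemLp hφ'c)
  have hφbound := setIntegral_Ioc_le_inv_pow_mul (g := fun t => ‖φ t‖ ^ 2) (s := s)
    (hφc.pow 2) (fun t => sq_nonneg _) hR hr hφint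
  have hφ'bound := setIntegral_Ioc_le_inv_pow_mul (g := fun t => ‖deriv φ t‖ ^ 2) (s := s)
    (hφ'c.pow 2) (fun t => sq_nonneg _) hR hr hφ'int
  calc ‖φ r‖ ^ 2 ≤ ‖φ s‖ ^ 2 + 2 * ∫ t in Ioc r s, ‖φ t‖ * ‖deriv φ t‖ :=
        norm_sq_le_norm_sq_add_integral hφ hrs
    _ ≤ ε + 2 * (√((r ^ n)⁻¹ * ∫ t in Ioi R, t ^ n * ‖φ t‖ ^ 2) *
          √((r ^ n)⁻¹ * ∫ t in Ioi R, t ^ n * ‖deriv φ t‖ ^ 2)) := by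
        gcongr
        exact hCS.trans (by gcongr)
    _ = _ := by
        rw [Real.sqrt_mul hrn, Real.sqrt_mul hrn]
        linear_combination (2 * √(∫ t in Ioi R, t ^ n * ‖φ t‖ ^ 2) *
          √(∫ t in Ioi R, t ^ n * ‖deriv φ t‖ ^ 2)) * Real.mul_self_sqrt hrn

end Profile

theorem ContinuousLinearMap.norm_apply_sq_le_sum {ι F : Type*} [Fintype ι] [DecidableEq ι]
    [NormedAddCommGroup F] [NormedSpace ℝ F] (L : EuclideanSpace ℝ ι →L[ℝ] F)
    (u : EuclideanSpace ℝ ι) :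
    ‖L u‖ ^ 2 ≤ ‖u‖ ^ 2 * ∑ i, ‖L (EuclideanSpace.single i 1)‖ ^ 2 := by
  have hu : u = ∑ i, u i • EuclideanSpace.single i (1 : ℝ) := by
    simpa using ((EuclideanSpace.basisFun ι ℝ).sum_repr u).symm
  calc ‖L u‖ ^ 2 ≤ (∑ i, ‖u i‖ * ‖L (EuclideanSpace.single i 1)‖) ^ 2 := by
        conv_lhs => rw [hu, map_sum]
        gcongr
        refine (norm_sum_le _ _).trans_eq (Finset.sum_congr rfl fun i _ => ?_)
        rw [map_smul, norm_smul]
    _ ≤ ‖u‖ ^ 2 * ∑ i, ‖L (EuclideanSpace.single i 1)‖ ^ 2 := by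
        rw [EuclideanSpace.norm_sq_eq]
        exact Finset.sum_mul_sq_le_sq_mul_sq _ _ _

namespace IsRadial

variable {d : ℕ} {f : Ed d → ℂ} {e : Ed d}

theorem eq_comp_norm_smul (hf : IsRadial f) (he : ‖e‖ = 1) (x : Ed d) :
    f x = f (‖x‖ • e) :=
  hf _ _ (by rw [norm_smul, he, mul_one, norm_norm])

theorem hasDerivAt_comp_smul (hf : IsRadial f) (he : ‖e‖ = 1) {x : Ed d}
    (hfx : DifferentiableAt ℝ f x) (hx : x ≠ 0) :
    HasDerivAt (fun t : ℝ => f (t • e)) (fderiv ℝ f x (‖x‖⁻¹ • x)) ‖x‖ := by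
  set u : Ed d := ‖x‖⁻¹ • x
  have hu : ‖u‖ = 1 := norm_smul_inv_norm hx
  have hprofile : (fun t : ℝ => f (t • e)) = fun t => f (t • u) :=
    funext fun t => hf _ _ (by rw [norm_smul, norm_smul, he, hu])
  have hxu : ‖x‖ • u = x := smul_inv_smul₀ (norm_ne_zero_iff.2 hx) x
  have hline : HasDerivAt (fun t : ℝ => t • u) u ‖x‖ := by
    simpa using (hasDerivAt_id ‖x‖).smul_const u
  rw [hprofile]
  exact (hxu.symm ▸ hfx.hasFDerivAt : HasFDerivAt f (fderiv ℝ f x) (‖x‖ • u)).comp_hasDerivAt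
    ‖x‖ hline

theorem norm_deriv_comp_smul_sq_le (hf : IsRadial f) (he : ‖e‖ = 1) {x : Ed d}
    (hfx : DifferentiableAt ℝ f x) (hx : x ≠ 0) :
    ‖deriv (fun t : ℝ => f (t • e)) ‖x‖‖ ^ 2 ≤ gradNormSq f x := by
  rw [(hf.hasDerivAt_comp_smul he hfx hx).deriv]
  have hunit : ‖‖x‖⁻¹ • x‖ = 1 := norm_smul_inv_norm hx
  have := (fderiv ℝ f x).norm_apply_sq_le_sum (‖x‖⁻¹ • x)
  rwa [hunit, one_pow, one_mul] at this

end IsRadial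

theorem Real.sqrt_mul_sqrt_le_div {a b c A B : ℝ} (hc : 0 < c) (hA : A = c * a)
    (hB : c * b ≤ B) : √a * √b ≤ √A * √B / c := by
  rw [le_div_iff₀ hc, hA, Real.sqrt_mul hc.le]
  calc √a * √b * c = √c * √a * √(c * b) := by
        rw [Real.sqrt_mul hc.le]
        linear_combination -(√a * √b) * Real.mul_self_sqrt hc.le
    _ ≤ √c * √a * √B := by gcongr

theorem mul_measureReal_ball_pos (d : ℕ) [NeZero d] :
    0 < d * volume.real (Metric.ball (0 : Ed d) 1) :=
  mul_pos (by simp [Nat.pos_of_neZero d])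
    (ENNReal.toReal_pos (Metric.measure_ball_pos _ _ one_pos).ne' measure_ball_lt_top.ne)

theorem IsRadial.norm_sq_le_of_le_norm {d : ℕ} [NeZero d] {f : Ed d → ℂ} (hrad : IsRadial f)
    (hf : ContDiff ℝ 1 f) {R : ℝ} (hR : 0 < R)
    (hL2 : IntegrableOn (fun y => ‖f y‖ ^ 2) {y : Ed d | R ≤ ‖y‖})
    (hgrad : IntegrableOn (gradNormSq f) {y : Ed d | R ≤ ‖y‖}) {x : Ed d} (hx : R ≤ ‖x‖) :
    ‖f x‖ ^ 2 ≤ 2 / (d * volume.real (Metric.ball (0 : Ed d) 1)) * (R ^ (d - 1))⁻¹ *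
      (√(∫ y in {y : Ed d | R ≤ ‖y‖}, ‖f y‖ ^ 2) *
        √(∫ y in {y : Ed d | R ≤ ‖y‖}, gradNormSq f y)) := by
  set S := {y : Ed d | R ≤ ‖y‖}
  have hS : MeasurableSet S := measurableSet_le measurable_const measurable_norm
  set c : ℝ := d * volume.real (Metric.ball (0 : Ed d) 1)
  have hc : 0 < c := mul_measureReal_ball_pos d
  have hpolar (g : ℝ → ℝ) : ∫ y in S, g ‖y‖ = c * ∫ t in Ioi R, t ^ (d - 1) * g t := by
    rw [setIntegral_fun_norm_addHaar_exterior volume hR, finrank_euclideanSpace_fin,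
      nsmul_eq_mul, smul_eq_mul, mul_assoc]
    rfl
  have hpolar_int (g : ℝ → ℝ) :
      IntegrableOn (fun y => g ‖y‖) S ↔ IntegrableOn (fun t => t ^ (d - 1) * g t) (Ioi R) := by
    rw [integrableOn_fun_norm_addHaar_exterior_iff volume hR, finrank_euclideanSpace_fin]
    rfl
  set e : Ed d := EuclideanSpace.single 0 1
  have he : ‖e‖ = 1 := by simp [e]
  set φ : ℝ → ℂ := fun t => f (t • e)
  have hφ : ContDiff ℝ 1 φ := hf.comp (contDiff_id.smul contDiff_const)
  have hfφ : ∀ y, f y = φ ‖y‖ := hrad.eq_comp_norm_smul he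
  have hφ'S : ∀ y ∈ S, ‖deriv φ ‖y‖‖ ^ 2 ≤ gradNormSq f y := fun y hy =>
    hrad.norm_deriv_comp_smul_sq_le he (hf.differentiable one_ne_zero y)
      (norm_pos_iff.1 (hR.trans_le hy))
  have hφ'int : IntegrableOn (fun y => ‖deriv φ ‖y‖‖ ^ 2) S :=
    hgrad.mono'
      ((hφ.continuous_deriv le_rfl).norm.pow 2 |>.comp continuous_norm).aestronglyMeasurable
      ((ae_restrict_iff' hS).2
        (.of_forall fun y hy => by rw [Real.norm_of_nonneg (sq_nonneg _)]; exact hφ'S y hy))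
  have hA : ∫ y in S, ‖f y‖ ^ 2 = c * ∫ t in Ioi R, t ^ (d - 1) * ‖φ t‖ ^ 2 := by
    simp_rw [hfφ]; exact hpolar fun t => ‖φ t‖ ^ 2
  have hB : c * ∫ t in Ioi R, t ^ (d - 1) * ‖deriv φ t‖ ^ 2 ≤ ∫ y in S, gradNormSq f y :=
    hpolar (fun t => ‖deriv φ t‖ ^ 2) ▸ setIntegral_mono_on hφ'int hgrad hS hφ'S
  calc ‖f x‖ ^ 2 = ‖φ ‖x‖‖ ^ 2 := by rw [hfφ]
    _ ≤ 2 * (‖x‖ ^ (d - 1))⁻¹ * (√(∫ t in Ioi R, t ^ (d - 1) * ‖φ t‖ ^ 2) *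
          √(∫ t in Ioi R, t ^ (d - 1) * ‖deriv φ t‖ ^ 2)) :=
        norm_sq_le_of_integrableOn_Ioi hφ hR hx
          ((hpolar_int fun t => ‖φ t‖ ^ 2).1 (by simpa only [hfφ] using hL2))
          ((hpolar_int fun t => ‖deriv φ t‖ ^ 2).1 hφ'int)
    _ ≤ 2 * (R ^ (d - 1))⁻¹ * (√(∫ y in S, ‖f y‖ ^ 2) * √(∫ y in S, gradNormSq f y) / c) := by
        gcongr
        exact Real.sqrt_mul_sqrt_le_div hc hA hB
    _ = _ := by ring

theorem exterior_bound_rpow_mul_eq {a R A B p : ℝ} {d : ℕ} (ha : 0 ≤ a) (hR : 0 < R)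
    (hA : 0 ≤ A) (hB : 0 ≤ B) (hp : 2 ≤ p) (hd : 1 ≤ d) :
    (a * (R ^ (d - 1))⁻¹ * (√A * √B)) ^ ((p - 2) / 2) * A =
      a ^ ((p - 2) / 2) * R ^ (-(((d : ℝ) - 1) * (p - 2)) / 2) *
        A ^ ((p + 2) / 4) * B ^ ((p - 2) / 4) := by
  have hRpow : ((R ^ (d - 1))⁻¹ : ℝ) ^ ((p - 2) / 2) = R ^ (-(((d : ℝ) - 1) * (p - 2)) / 2) := by
    rw [← Real.rpow_natCast R (d - 1), ← Real.rpow_neg hR.le, ← Real.rpow_mul hR.le,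
      Nat.cast_sub hd, Nat.cast_one]
    ring_nf
  have hsqrt (X : ℝ) (hX : 0 ≤ X) : √X ^ ((p - 2) / 2) = X ^ ((p - 2) / 4) := by
    rw [Real.sqrt_eq_rpow, ← Real.rpow_mul hX]
    ring_nf
  have hApow : A ^ ((p - 2) / 4) * A = A ^ ((p + 2) / 4) := by
    rw [← Real.rpow_add_one' hA (by linarith)]
    ring_nf
  rw [Real.mul_rpow (by positivity) (by positivity), Real.mul_rpow ha (by positivity),
    Real.mul_rpow (Real.sqrt_nonneg A) (Real.sqrt_nonneg B), hRpow, hsqrt A hA, hsqrt B hB,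
    ← hApow]
  ring

/-- the radial Sobolev inequality on exterior regions. -/
theorem statement4 (d : ℕ) (hd : 3 ≤ d) (p : ℝ) (hp : 2 ≤ p) :
    ∃ C > (0 : ℝ), ∀ R > (0 : ℝ), ∀ f : Ed d → ℂ, IsRadial f → ContDiff ℝ 1 f →
      Integrable (fun x => ‖f x‖ ^ 2) → Integrable (fun x => gradNormSq f x) →
      (∫ x in {y : Ed d | R ≤ ‖y‖}, ‖f x‖ ^ p) ≤
        C * R ^ (-(((d : ℝ) - 1) * (p - 2)) / 2) *
          (∫ x in {y : Ed d | R ≤ ‖y‖}, ‖f x‖ ^ 2) ^ ((p + 2) / 4) *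
          (∫ x in {y : Ed d | R ≤ ‖y‖}, gradNormSq f x) ^ ((p - 2) / 4) := by
  have : NeZero d := ⟨by omega⟩
  have hc := mul_measureReal_ball_pos d
  refine ⟨(2 / (d * volume.real (Metric.ball (0 : Ed d) 1))) ^ ((p - 2) / 2), by positivity,
    fun R hR f hrad hf hL2 hgrad => ?_⟩
  have hS : MeasurableSet {y : Ed d | R ≤ ‖y‖} := measurableSet_le measurable_const measurable_norm
  calc _ ≤ _ := setIntegral_rpow_le_of_sq_le (fun x => norm_nonneg _) hS hL2.integrableOn
        (fun x hx => hrad.norm_sq_le_of_le_norm hf hR hL2.integrableOn hgrad.integrableOn hx) hp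
    _ = _ := exterior_bound_rpow_mul_eq (by positivity) hR
        (setIntegral_nonneg hS fun x _ => sq_nonneg _)
        (setIntegral_nonneg hS fun x _ => Finset.sum_nonneg fun i _ => sq_nonneg _) hp (by omega)
end
end

section
/- Let d ≥ 3 be an integer. Define W_0(x) = [d(d−2)]^{(d−2)/4} (1 + |x|²)^{−(d−2)/2} and W_1(x) = ((d−2)/2) W_0(x) + x · ∇W_0(x). Then W_0, iW_0, and W_1 have square-integrable gradients and are pairwise orthogonal in the real Hilbert space Ḣ¹(ℝ^d; ℂ): ⟨W_0, iW_0⟩_{Ḣ¹} = 0, ⟨W_0, W_1⟩_{Ḣ¹} = 0, and ⟨iW_0, W_1⟩_{Ḣ¹} = 0. -/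
noncomputable section

open MeasureTheory Complex

/-! `W₀ = φ₀(|x|²)` and `W₁ = φ₁(|x|²)` are radial, so `∇Wⱼ(x) = 2 φⱼ'(|x|²) x` is a *real*
multiple of `x`. Hence the real part of `∇W₀ · conj(i ∇Wⱼ)` vanishes pointwise, and
`|∇Wⱼ|² ≲ (1 + |x|²)^(1-d)` is integrable for `d ≥ 3`. In polar coordinates `⟨W₀, W₁⟩_{Ḣ¹}`
becomes `∫₀^∞ F'` with `F(r) = c r^(d+2) / (1 + r²)^d`, and `F` vanishes at `0` and at `∞`. -/

open Filter Topology

def gradInnerR {d : ℕ} (f g : Ed d → ℝ) (x : Ed d) : ℝ :=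
  ∑ i, gradR f x i * gradR g x i

section RealGradient

variable {d : ℕ} {f g : Ed d → ℝ} {x : Ed d}

lemma gradNormSqR_eq_gradInnerR : gradNormSqR f x = gradInnerR f f x := by
  simp only [gradNormSqR, gradInnerR, sq]

lemma measurable_gradInnerR : Measurable (gradInnerR f g) := by
  unfold gradInnerR gradR
  fun_prop

lemma measurable_gradNormSqR : Measurable (gradNormSqR f) := by
  unfold gradNormSqR gradR
  fun_prop

lemma abs_gradInnerR_le : |gradInnerR f g x| ≤ gradNormSqR f x + gradNormSqR g x := by
  rw [gradNormSqR, gradNormSqR, ← Finset.sum_add_distrib]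
  refine (Finset.abs_sum_le_sum_abs _ _).trans (Finset.sum_le_sum fun i _ => ?_)
  rw [abs_mul]
  nlinarith [sq_abs (gradR f x i), sq_abs (gradR g x i),
    sq_nonneg (|gradR f x i| - |gradR g x i|)]

lemma integrable_gradInnerR (hf : Integrable (gradNormSqR f)) (hg : Integrable (gradNormSqR g)) :
    Integrable (gradInnerR f g) :=
  (hf.add hg).mono' measurable_gradInnerR.aestronglyMeasurable
    (.of_forall fun _ => abs_gradInnerR_le)

end RealGradient

section ComplexOfReal

variable {d : ℕ} {f g : Ed d → ℝ} {x : Ed d}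

lemma hasFDerivAt_ofReal_comp {f' : Ed d →L[ℝ] ℝ} (hf : HasFDerivAt f f' x) :
    HasFDerivAt (fun y => (f y : ℂ)) (ofRealCLM.comp f') x :=
  ofRealCLM.hasFDerivAt.comp x hf

lemma grad_ofReal (hf : DifferentiableAt ℝ f x) (i : Fin d) :
    grad (fun y => (f y : ℂ)) x i = gradR f x i := by
  rw [grad, (hasFDerivAt_ofReal_comp hf.hasFDerivAt).fderiv]
  rfl

lemma grad_I_mul_ofReal (hf : DifferentiableAt ℝ f x) (i : Fin d) :
    grad (fun y => I * (f y : ℂ)) x i = I * gradR f x i := by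
  rw [grad, ((hasFDerivAt_ofReal_comp hf.hasFDerivAt).const_mul I).fderiv]
  rfl

lemma gradNormSq_ofReal (hf : DifferentiableAt ℝ f x) :
    gradNormSq (fun y => (f y : ℂ)) x = gradNormSqR f x := by
  simp [gradNormSq, gradNormSqR, grad_ofReal hf]

lemma gradNormSq_I_mul_ofReal (hf : DifferentiableAt ℝ f x) :
    gradNormSq (fun y => I * (f y : ℂ)) x = gradNormSqR f x := by
  simp [gradNormSq, gradNormSqR, grad_I_mul_ofReal hf]

lemma H1inner_ofReal (hf : Differentiable ℝ f) (hg : Differentiable ℝ g) :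
    H1inner (fun y => (f y : ℂ)) (fun y => (g y : ℂ)) = ∫ x, gradInnerR f g x := by
  simp [H1inner, gradInnerR, grad_ofReal (hf _), grad_ofReal (hg _)]

lemma H1inner_ofReal_I_mul_ofReal (hf : Differentiable ℝ f) (hg : Differentiable ℝ g) :
    H1inner (fun y => (f y : ℂ)) (fun y => I * (g y : ℂ)) = 0 := by
  simp [H1inner, grad_ofReal (hf _), grad_I_mul_ofReal (hg _)]

lemma H1inner_I_mul_ofReal_ofReal (hf : Differentiable ℝ f) (hg : Differentiable ℝ g) :
    H1inner (fun y => I * (f y : ℂ)) (fun y => (g y : ℂ)) = 0 := by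
  simp [H1inner, grad_ofReal (hg _), grad_I_mul_ofReal (hf _)]

end ComplexOfReal

lemma hasFDerivAt_comp_norm_sq {E : Type*} [NormedAddCommGroup E] [InnerProductSpace ℝ E]
    {φ : ℝ → ℝ} {φ' : ℝ} {x : E} (h : HasDerivAt φ φ' (‖x‖ ^ 2)) :
    HasFDerivAt (fun y => φ (‖y‖ ^ 2)) ((2 * φ') • innerSL ℝ x) x := by
  refine (h.comp_hasFDerivAt x (hasFDerivAt_id x).norm_sq).congr_fderiv ?_
  ext v
  simp
  ring

section Radial

variable {d : ℕ} {φ ψ : ℝ → ℝ} {x : Ed d}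

lemma gradR_comp_norm_sq {φ' : ℝ} (h : HasDerivAt φ φ' (‖x‖ ^ 2)) (i : Fin d) :
    gradR (fun y : Ed d => φ (‖y‖ ^ 2)) x i = 2 * φ' * x i := by
  simp [gradR, (hasFDerivAt_comp_norm_sq h).fderiv, EuclideanSpace.inner_single_right]

lemma gradInnerR_comp_norm_sq {φ' ψ' : ℝ} (hφ : HasDerivAt φ φ' (‖x‖ ^ 2))
    (hψ : HasDerivAt ψ ψ' (‖x‖ ^ 2)) :
    gradInnerR (fun y => φ (‖y‖ ^ 2)) (fun y => ψ (‖y‖ ^ 2)) x = 4 * φ' * ψ' * ‖x‖ ^ 2 := by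
  simp only [gradInnerR, gradR_comp_norm_sq hφ, gradR_comp_norm_sq hψ]
  simp only [EuclideanSpace.norm_sq_eq, Real.norm_eq_abs, sq_abs, Finset.mul_sum]
  exact Finset.sum_congr rfl fun i _ => by ring

lemma gradNormSqR_comp_norm_sq {φ' : ℝ} (hφ : HasDerivAt φ φ' (‖x‖ ^ 2)) :
    gradNormSqR (fun y => φ (‖y‖ ^ 2)) x = 4 * φ' ^ 2 * ‖x‖ ^ 2 := by
  rw [gradNormSqR_eq_gradInnerR, gradInnerR_comp_norm_sq hφ hφ]
  ring

lemma integrable_gradNormSqR_comp_norm_sq (hd : 2 < d) {φ' : ℝ → ℝ} {C : ℝ}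
    (hφ : ∀ t, 0 ≤ t → HasDerivAt φ (φ' t) t)
    (hbound : ∀ t, 0 ≤ t → φ' t ^ 2 ≤ C * (1 + t) ^ (-(d : ℝ))) :
    Integrable (gradNormSqR fun x : Ed d => φ (‖x‖ ^ 2)) := by
  have hdim : (Module.finrank ℝ (Ed d) : ℝ) < 2 * d - 2 := by
    rw [finrank_euclideanSpace_fin]
    have : (2 : ℝ) < d := by exact_mod_cast hd
    linarith
  refine ((integrable_rpow_neg_one_add_norm_sq hdim).const_mul (4 * C)).mono'
    measurable_gradNormSqR.aestronglyMeasurable (.of_forall fun x => ?_)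
  have ht : 0 ≤ ‖x‖ ^ 2 := by positivity
  have hq : 0 < 1 + ‖x‖ ^ 2 := by positivity
  have hexp : (1 + ‖x‖ ^ 2) ^ (-(2 * (d : ℝ) - 2) / 2) =
      (1 + ‖x‖ ^ 2) ^ (-(d : ℝ)) * (1 + ‖x‖ ^ 2) := by
    rw [← Real.rpow_add_one hq.ne']; ring_nf
  rw [gradNormSqR_comp_norm_sq (hφ _ ht), Real.norm_eq_abs, abs_of_nonneg (by positivity), hexp]
  have hC := hbound _ ht
  calc 4 * φ' (‖x‖ ^ 2) ^ 2 * ‖x‖ ^ 2 = 4 * (φ' (‖x‖ ^ 2) ^ 2 * ‖x‖ ^ 2) := by ring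
    _ ≤ 4 * (C * (1 + ‖x‖ ^ 2) ^ (-(d : ℝ)) * (1 + ‖x‖ ^ 2)) := by
        gcongr
        · exact (sq_nonneg _).trans hC
        · linarith
    _ = _ := by ring

end Radial

lemma integral_fun_norm_eq_zero_of_hasDerivAt {E : Type*} [NormedAddCommGroup E]
    [NormedSpace ℝ E] [FiniteDimensional ℝ E] [MeasurableSpace E] [BorelSpace E] [Nontrivial E]
    (μ : Measure E) [μ.IsAddHaarMeasure] {G F : ℝ → ℝ} (hG : Integrable (fun x => G ‖x‖) μ)
    (hF : ∀ r ∈ Set.Ici 0, HasDerivAt F (r ^ (Module.finrank ℝ E - 1) * G r) r) (hF0 : F 0 = 0)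
    (hFtop : Tendsto F atTop (𝓝 0)) :
    ∫ x, G ‖x‖ ∂μ = 0 := by
  rw [integrable_fun_norm_addHaar μ] at hG
  simp only [integral_fun_norm_addHaar μ G, smul_eq_mul] at hG ⊢
  rw [integral_Ioi_of_hasDerivAt_of_tendsto' hF hG hFtop, hF0, sub_zero, mul_zero, smul_zero]

lemma hasDerivAt_pow_div_one_add_sq_pow (n : ℕ) (r : ℝ) :
    HasDerivAt (fun s : ℝ => s ^ (n + 2) / (1 + s ^ 2) ^ n)
      (r ^ (n + 1) * ((n + 2) - (n - 2) * r ^ 2) / (1 + r ^ 2) ^ (n + 1)) r := by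
  have hq : (1 + r ^ 2) ≠ 0 := by positivity
  have hden : HasDerivAt (fun s : ℝ => (1 + s ^ 2) ^ n)
      (n * (1 + r ^ 2) ^ (n - 1) * (2 * r)) r := by
    have h := ((hasDerivAt_pow 2 r).const_add 1).pow n
    simp only [Nat.cast_ofNat, Nat.add_one_sub_one, pow_one] at h
    exact h
  refine ((hasDerivAt_pow (n + 2) r).div hden (pow_ne_zero _ hq)).congr_deriv ?_
  rcases n with _ | n
  · field_simp; ring
  · field_simp
    push_cast
    ring

lemma tendsto_pow_div_one_add_sq_pow {n : ℕ} (hn : 2 < n) :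
    Tendsto (fun r : ℝ => r ^ (n + 2) / (1 + r ^ 2) ^ n) atTop (𝓝 0) := by
  have hdecay : Tendsto (fun r : ℝ => (r ^ (n - 2))⁻¹) atTop (𝓝 0) :=
    tendsto_inv_atTop_zero.comp (tendsto_pow_atTop (by omega))
  refine squeeze_zero' ?_ ?_ hdecay
  · filter_upwards [eventually_ge_atTop 0] with r hr
    positivity
  · filter_upwards [eventually_gt_atTop 0] with r hr
    rw [div_le_iff₀ (by positivity), inv_mul_eq_div, le_div_iff₀ (by positivity)]
    calc r ^ (n + 2) * r ^ (n - 2) = (r ^ 2) ^ n := by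
          rw [← pow_add, ← pow_mul]; congr 1; omega
      _ ≤ (1 + r ^ 2) ^ n := by gcongr; linarith

lemma rpow_neg_half_sq {x : ℝ} (hx : 0 < x) (d : ℕ) :
    (x ^ (-((d : ℝ) / 2))) ^ 2 = x ^ (-(d : ℝ)) := by
  rw [← Real.rpow_natCast, ← Real.rpow_mul hx.le]
  ring_nf

section Talenti

variable {d : ℕ} {t : ℝ}

def talentiConst (d : ℕ) : ℝ := ((d : ℝ) * ((d : ℝ) - 2)) ^ (((d : ℝ) - 2) / 4)

def w0Profile (d : ℕ) (t : ℝ) : ℝ := talentiConst d * (1 + t) ^ (-(((d : ℝ) - 2) / 2))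

def w0ProfileDeriv (d : ℕ) (t : ℝ) : ℝ :=
  -(((d : ℝ) - 2) / 2 * talentiConst d) * (1 + t) ^ (-((d : ℝ) / 2))

def w1Profile (d : ℕ) (t : ℝ) : ℝ :=
  ((d : ℝ) - 2) / 2 * talentiConst d * (1 - t) * (1 + t) ^ (-((d : ℝ) / 2))

def w1ProfileDeriv (d : ℕ) (t : ℝ) : ℝ :=
  -(((d : ℝ) - 2) / 2 * talentiConst d / 2) * (1 + t) ^ (-((d : ℝ) / 2) - 1) *
    ((d + 2) - (d - 2) * t)

lemma W0_eq_w0Profile : W0 d = fun x => w0Profile d (‖x‖ ^ 2) := rfl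

lemma hasDerivAt_w0Profile (ht : 0 ≤ t) : HasDerivAt (w0Profile d) (w0ProfileDeriv d t) t := by
  have h := (((hasDerivAt_id t).const_add 1).rpow_const
    (p := -(((d : ℝ) - 2) / 2)) (Or.inl (by simp; linarith))).const_mul (talentiConst d)
  refine h.congr_deriv ?_
  rw [w0ProfileDeriv, show -(((d : ℝ) - 2) / 2) - 1 = -((d : ℝ) / 2) by ring]
  simp only [id]
  ring

lemma hasDerivAt_w1Profile (ht : 0 ≤ t) : HasDerivAt (w1Profile d) (w1ProfileDeriv d t) t := by
  have hq : 0 < 1 + t := by linarith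
  have h := ((((hasDerivAt_id t).const_sub 1).const_mul (((d : ℝ) - 2) / 2 * talentiConst d)).mul
    (((hasDerivAt_id t).const_add 1).rpow_const (p := -((d : ℝ) / 2)) (Or.inl hq.ne')))
  refine h.congr_deriv ?_
  simp only [id]
  rw [w1ProfileDeriv, show (1 + t) ^ (-((d : ℝ) / 2)) = (1 + t) ^ (-((d : ℝ) / 2) - 1) * (1 + t) by
    rw [← Real.rpow_add_one hq.ne']; ring_nf]
  ring

lemma W1_eq_w1Profile : W1 d = fun x => w1Profile d (‖x‖ ^ 2) := by
  funext x
  have hq : 0 < 1 + ‖x‖ ^ 2 := by positivity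
  rw [W1, W0_eq_w0Profile,
    (hasFDerivAt_comp_norm_sq (hasDerivAt_w0Profile (sq_nonneg ‖x‖))).fderiv]
  simp only [smul_apply, innerSL_apply_apply, real_inner_self_eq_norm_sq,
    smul_eq_mul, w0Profile, w0ProfileDeriv, w1Profile]
  rw [show -(((d : ℝ) - 2) / 2) = -((d : ℝ) / 2) + 1 by ring, Real.rpow_add_one hq.ne']
  ring

lemma w0ProfileDeriv_sq (ht : 0 ≤ t) :
    w0ProfileDeriv d t ^ 2 = (((d : ℝ) - 2) / 2 * talentiConst d) ^ 2 * (1 + t) ^ (-(d : ℝ)) := by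
  rw [w0ProfileDeriv, mul_pow, neg_sq, rpow_neg_half_sq (by linarith)]

lemma w1ProfileDeriv_sq_le (ht : 0 ≤ t) :
    w1ProfileDeriv d t ^ 2 ≤
      (((d : ℝ) - 2) / 2 * talentiConst d * (d + 2) / 2) ^ 2 * (1 + t) ^ (-(d : ℝ)) := by
  have hq : 0 < 1 + t := by linarith
  have hlin : ((d + 2) - (d - 2) * t) ^ 2 ≤ ((d + 2) * (1 + t)) ^ 2 := by
    apply sq_le_sq' <;> nlinarith [(Nat.cast_nonneg d : (0 : ℝ) ≤ d)]
  have hpow : (1 + t) ^ (-((d : ℝ) / 2) - 1) * (1 + t) = (1 + t) ^ (-((d : ℝ) / 2)) := by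
    rw [← Real.rpow_add_one hq.ne']; ring_nf
  calc w1ProfileDeriv d t ^ 2
      = (((d : ℝ) - 2) / 2 * talentiConst d / 2) ^ 2 * ((1 + t) ^ (-((d : ℝ) / 2) - 1)) ^ 2 *
          ((d + 2) - (d - 2) * t) ^ 2 := by rw [w1ProfileDeriv]; ring
    _ ≤ (((d : ℝ) - 2) / 2 * talentiConst d / 2) ^ 2 * ((1 + t) ^ (-((d : ℝ) / 2) - 1)) ^ 2 *
          ((d + 2) * (1 + t)) ^ 2 := by gcongr
    _ = (((d : ℝ) - 2) / 2 * talentiConst d * (d + 2) / 2) ^ 2 *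
          ((1 + t) ^ (-((d : ℝ) / 2) - 1) * (1 + t)) ^ 2 := by ring
    _ = _ := by rw [hpow, rpow_neg_half_sq hq]

lemma differentiable_W0 : Differentiable ℝ (W0 d) := by
  rw [W0_eq_w0Profile]
  exact fun x => (hasFDerivAt_comp_norm_sq (hasDerivAt_w0Profile (sq_nonneg ‖x‖))).differentiableAt

lemma differentiable_W1 : Differentiable ℝ (W1 d) := by
  rw [W1_eq_w1Profile]
  exact fun x => (hasFDerivAt_comp_norm_sq (hasDerivAt_w1Profile (sq_nonneg ‖x‖))).differentiableAt

lemma integrable_gradNormSqR_W0 (hd : 2 < d) : Integrable (gradNormSqR (W0 d)) := by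
  rw [W0_eq_w0Profile]
  exact integrable_gradNormSqR_comp_norm_sq hd (fun _ => hasDerivAt_w0Profile)
    fun _ ht => (w0ProfileDeriv_sq ht).le

lemma integrable_gradNormSqR_W1 (hd : 2 < d) : Integrable (gradNormSqR (W1 d)) := by
  rw [W1_eq_w1Profile]
  exact integrable_gradNormSqR_comp_norm_sq hd (fun _ => hasDerivAt_w1Profile)
    fun _ ht => w1ProfileDeriv_sq_le ht

lemma pow_mul_w0ProfileDeriv_mul_w1ProfileDeriv (hd : 1 ≤ d) (r : ℝ) :
    r ^ (d - 1) * (4 * w0ProfileDeriv d (r ^ 2) * w1ProfileDeriv d (r ^ 2) * r ^ 2) =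
      2 * (((d : ℝ) - 2) / 2 * talentiConst d) ^ 2 *
        (r ^ (d + 1) * ((d + 2) - (d - 2) * r ^ 2) / (1 + r ^ 2) ^ (d + 1)) := by
  have hq : 0 < 1 + r ^ 2 := by positivity
  have hpow : (1 + r ^ 2) ^ (-((d : ℝ) / 2)) * (1 + r ^ 2) ^ (-((d : ℝ) / 2) - 1) =
      ((1 + r ^ 2) ^ (d + 1))⁻¹ := by
    rw [← Real.rpow_add hq, ← Real.rpow_natCast (1 + r ^ 2), ← Real.rpow_neg hq.le]
    push_cast; ring_nf
  have hr : r ^ (d - 1) * r ^ 2 = r ^ (d + 1) := by rw [← pow_add]; congr 1; omega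
  rw [w0ProfileDeriv, w1ProfileDeriv, div_eq_mul_inv _ ((1 + r ^ 2) ^ (d + 1)), ← hpow, ← hr]
  ring

lemma integral_gradInnerR_W0_W1 (hd : 2 < d) : ∫ x, gradInnerR (W0 d) (W1 d) x = 0 := by
  have : Nonempty (Fin d) := ⟨⟨0, by omega⟩⟩
  have hradial : gradInnerR (W0 d) (W1 d) =
      fun x => 4 * w0ProfileDeriv d (‖x‖ ^ 2) * w1ProfileDeriv d (‖x‖ ^ 2) * ‖x‖ ^ 2 := by
    rw [W0_eq_w0Profile, W1_eq_w1Profile]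
    exact funext fun x => gradInnerR_comp_norm_sq (hasDerivAt_w0Profile (sq_nonneg _))
      (hasDerivAt_w1Profile (sq_nonneg _))
  have hint := integrable_gradInnerR (integrable_gradNormSqR_W0 hd) (integrable_gradNormSqR_W1 hd)
  have hdecay := (tendsto_pow_div_one_add_sq_pow hd).const_mul
    (2 * (((d : ℝ) - 2) / 2 * talentiConst d) ^ 2)
  rw [mul_zero] at hdecay
  rw [hradial] at hint ⊢
  refine integral_fun_norm_eq_zero_of_hasDerivAt volume
    (G := fun r => 4 * w0ProfileDeriv d (r ^ 2) * w1ProfileDeriv d (r ^ 2) * r ^ 2) hint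
    (fun r _ => ?_) (by simp) hdecay
  rw [finrank_euclideanSpace_fin, pow_mul_w0ProfileDeriv_mul_w1ProfileDeriv (by omega)]
  exact (hasDerivAt_pow_div_one_add_sq_pow d r).const_mul _

end Talenti

/-- `W_0`, `iW_0`, `W_1` have square-integrable gradients and are
pairwise orthogonal in the real Hilbert space `Ḣ¹(ℝ^d; ℂ)`. -/
theorem statement12 (d : ℕ) (hd : 3 ≤ d) :
    Integrable (fun x => gradNormSq (fun y : Ed d => (W0 d y : ℂ)) x) ∧
    Integrable (fun x => gradNormSq (fun y : Ed d => Complex.I * (W0 d y : ℂ)) x) ∧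
    Integrable (fun x => gradNormSq (fun y : Ed d => (W1 d y : ℂ)) x) ∧
    H1inner (fun y : Ed d => (W0 d y : ℂ)) (fun y => Complex.I * (W0 d y : ℂ)) = 0 ∧
    H1inner (fun y : Ed d => (W0 d y : ℂ)) (fun y => (W1 d y : ℂ)) = 0 ∧
    H1inner (fun y : Ed d => Complex.I * (W0 d y : ℂ)) (fun y => (W1 d y : ℂ)) = 0 := by
  have hW0 : Differentiable ℝ (W0 d) := differentiable_W0
  have hW1 : Differentiable ℝ (W1 d) := differentiable_W1
  refine ⟨?_, ?_, ?_, H1inner_ofReal_I_mul_ofReal hW0 hW0, ?_, H1inner_I_mul_ofReal_ofReal hW0 hW1⟩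
  · simpa only [gradNormSq_ofReal (hW0 _)] using integrable_gradNormSqR_W0 hd
  · simpa only [gradNormSq_I_mul_ofReal (hW0 _)] using integrable_gradNormSqR_W0 hd
  · simpa only [gradNormSq_ofReal (hW1 _)] using integrable_gradNormSqR_W1 hd
  · rw [H1inner_ofReal hW0 hW1, integral_gradInnerR_W0_W1 hd]
end
end
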